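/- Consider the exact DPP iteration with parameter η > 0 started from Ψ_0 with ‖Ψ_0‖ ≤ V_max, and define the auxiliary action-value functions by Q_0 = Ψ_0 and Q_k = ((k−1)/k) T^{π_{k−1}} Q_{k−1} + (1/k) T^{π_{k−1}} Q_0 for k ≥ 1, where π_k is the soft-max policy associated with Ψ_k. Then for every integer k ≥ 1: ‖Q* − Q_k‖ ≤ γ(4 V_max + log(L)/η) / ((1−γ) k). -/

import Mathlib

open Finset Real Filter

variable {X A : Type*}

/-- `(πQ)(x) = Σ_a π(a|x) Q(x,a)`. -/
noncomputable def polApply [Fintype A] (pol : X → A → ℝ) (Q : X → A → ℝ) : X → ℝ :=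
  fun x => ∑ a, pol x a * Q x a

/-- Bellman operator `T^π`. -/
noncomputable def bellman [Fintype X] [Fintype A]
    (P : X → A → X → ℝ) (r : X → A → ℝ) (γ : ℝ) (pol : X → A → ℝ)
    (Q : X → A → ℝ) : X → A → ℝ :=
  fun x a => r x a + γ * ∑ x', ∑ a', P x a x' * pol x' a' * Q x' a'

/-- Bellman optimality operator `T`. -/
noncomputable def bellmanOpt [Fintype X] [Fintype A] [Nonempty A]
    (P : X → A → X → ℝ) (r : X → A → ℝ) (γ : ℝ) (Q : X → A → ℝ) : X → A → ℝ :=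
  fun x a => r x a + γ * ∑ x', P x a x' * (Finset.univ.sup' Finset.univ_nonempty (Q x'))

/-- Soft-max policy associated with action preferences `Ψ` at inverse temperature `η`. -/
noncomputable def softmaxPol [Fintype A] (η : ℝ) (Ψ : X → A → ℝ) : X → A → ℝ :=
  fun x a => Real.exp (η * Ψ x a) / ∑ a', Real.exp (η * Ψ x a')

/-- Supremum norm over state-action pairs. -/
noncomputable def supNorm [Fintype X] [Fintype A] [Nonempty X] [Nonempty A]
    (Q : X → A → ℝ) : ℝ :=
  Finset.univ.sup' Finset.univ_nonempty (fun p : X × A => |Q p.1 p.2|)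

/-! The auxiliary functions are tied to the DPP iterates through the state function
`g_k = Σ_{j<k} π_j Ψ_j`: unrolling both recursions gives `k Q_k = k r + γ P g_k` and
`k Q_k + Q_0 = Ψ_k + g_k`. The soft-max value `π_k Ψ_k` lies within `log L / η` below
`max_a Ψ_k`, and `max_a` is 1-Lipschitz in the sup norm, so comparing with
`(k+1) Q* = (k+1) r + γ P max_a ((k+1) Q*)` gives, for `e_k = k ‖Q* - Q_k‖`,
`e_{k+1} ≤ γ (e_k + ‖Q* - Q_0‖ + log L / η)`. Hence `e_k ≤ γ (‖Q* - Q_0‖ + log L / η) / (1 - γ)`,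
and `‖Q* - Q_0‖ ≤ ‖Q*‖ + ‖Ψ_0‖ ≤ 2 V_max`. -/

lemma abs_apply_le_norm [Fintype X] [Fintype A] (Q : X → A → ℝ) (x : X) (a : A) :
    |Q x a| ≤ ‖Q‖ :=
  (Real.norm_eq_abs _).symm.trans_le ((norm_le_pi_norm (Q x) a).trans (norm_le_pi_norm Q x))

lemma norm_le_of_forall_abs_le [Fintype X] [Fintype A] [Nonempty X] [Nonempty A]
    {Q : X → A → ℝ} {c : ℝ} (h : ∀ x a, |Q x a| ≤ c) : ‖Q‖ ≤ c := by
  have hc : 0 ≤ c := (abs_nonneg _).trans (h (Classical.arbitrary X) (Classical.arbitrary A))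
  exact (pi_norm_le_iff_of_nonneg hc).2 fun x => (pi_norm_le_iff_of_nonneg hc).2 fun a => h x a

lemma supNorm_eq_norm [Fintype X] [Fintype A] [Nonempty X] [Nonempty A] (Q : X → A → ℝ) :
    supNorm Q = ‖Q‖ :=
  le_antisymm (Finset.sup'_le _ _ fun p _ => abs_apply_le_norm Q p.1 p.2)
    (norm_le_of_forall_abs_le fun x a =>
      Finset.le_sup' (fun p : X × A => |Q p.1 p.2|) (mem_univ (x, a)))

lemma abs_sup'_sub_sup'_le {ι : Type*} {s : Finset ι} (hs : s.Nonempty) {f g : ι → ℝ} {c : ℝ}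
    (h : ∀ i ∈ s, |f i - g i| ≤ c) : |s.sup' hs f - s.sup' hs g| ≤ c := by
  rw [abs_sub_le_iff, sub_le_iff_le_add, sub_le_iff_le_add]
  constructor <;> refine Finset.sup'_le _ _ fun i hi => ?_
  · linarith [(abs_sub_le_iff.1 (h i hi)).1, Finset.le_sup' g hi]
  · linarith [(abs_sub_le_iff.1 (h i hi)).2, Finset.le_sup' f hi]

lemma abs_sum_mul_le {ι : Type*} [Fintype ι] {p h : ι → ℝ} {c : ℝ} (hp0 : ∀ i, 0 ≤ p i)
    (hp1 : ∑ i, p i = 1) (hh : ∀ i, |h i| ≤ c) : |∑ i, p i * h i| ≤ c :=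
  calc |∑ i, p i * h i| ≤ ∑ i, p i * |h i| := by
        simpa only [abs_mul, abs_of_nonneg (hp0 _)] using
          Finset.abs_sum_le_sum_abs (fun i => p i * h i) univ
    _ ≤ ∑ i, p i * c := by gcongr with i; exact hp0 i; exact hh i
    _ = c := by rw [← Finset.sum_mul, hp1, one_mul]

lemma le_div_one_sub_of_succ_le_mul_add {e : ℕ → ℝ} {γ c : ℝ} (hγ0 : 0 ≤ γ) (hγ1 : γ < 1)
    (h0 : e 0 ≤ γ * c / (1 - γ)) (hsucc : ∀ k, e (k + 1) ≤ γ * (e k + c)) (k : ℕ) :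
    e k ≤ γ * c / (1 - γ) := by
  induction k with
  | zero => exact h0
  | succ k ih =>
    have h1γ : 1 - γ ≠ 0 := by linarith
    calc e (k + 1) ≤ γ * (γ * c / (1 - γ) + c) := (hsucc k).trans (by gcongr)
      _ = γ * c / (1 - γ) := by field_simp; ring

lemma bellman_apply [Fintype X] [Fintype A] (P : X → A → X → ℝ) (r : X → A → ℝ) (γ : ℝ)
    (pol Q : X → A → ℝ) (x : X) (a : A) :
    bellman P r γ pol Q x a = r x a + γ * ∑ x', P x a x' * polApply pol Q x' := by
  simp only [bellman, polApply, Finset.mul_sum, mul_assoc]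

lemma polApply_le_sup' [Fintype A] [Nonempty A] {pol : X → A → ℝ} {x : X}
    (h0 : ∀ a, 0 ≤ pol x a) (h1 : ∑ a, pol x a = 1) (Q : X → A → ℝ) :
    polApply pol Q x ≤ univ.sup' univ_nonempty (Q x) :=
  calc polApply pol Q x ≤ ∑ a, pol x a * univ.sup' univ_nonempty (Q x) :=
        Finset.sum_le_sum fun a _ => mul_le_mul_of_nonneg_left (le_sup' _ (mem_univ a)) (h0 a)
    _ = _ := by rw [← Finset.sum_mul, h1, one_mul]

section softmax

variable [Fintype A] [Nonempty A]

lemma sum_exp_pos (η : ℝ) (Ψ : X → A → ℝ) (x : X) : 0 < ∑ a, Real.exp (η * Ψ x a) :=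
  Finset.sum_pos (fun _ _ => Real.exp_pos _) univ_nonempty

lemma softmaxPol_pos (η : ℝ) (Ψ : X → A → ℝ) (x : X) (a : A) : 0 < softmaxPol η Ψ x a :=
  div_pos (Real.exp_pos _) (sum_exp_pos η Ψ x)

lemma sum_softmaxPol (η : ℝ) (Ψ : X → A → ℝ) (x : X) : ∑ a, softmaxPol η Ψ x a = 1 := by
  simp only [softmaxPol, ← Finset.sum_div, div_self (sum_exp_pos η Ψ x).ne']

/-- The entropy of the soft-max policy is at most `log L` (Jensen for `log`), and its
log-partition function is at least `η · max Ψ`. -/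
lemma sup'_sub_log_card_div_le_polApply_softmaxPol {η : ℝ} (hη : 0 < η) (Ψ : X → A → ℝ)
    (x : X) :
    univ.sup' univ_nonempty (Ψ x) - Real.log (Fintype.card A) / η ≤
      polApply (softmaxPol η Ψ) Ψ x := by
  set p := softmaxPol η Ψ x
  set Z := ∑ a, Real.exp (η * Ψ x a)
  have hZ : 0 < Z := sum_exp_pos η Ψ x
  have hp : ∀ a, 0 < p a := softmaxPol_pos η Ψ x
  have hlog_inv : ∀ a, Real.log (p a)⁻¹ = Real.log Z - η * Ψ x a := fun a => by
    rw [show (p a)⁻¹ = Z / Real.exp (η * Ψ x a) from inv_div _ _,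
      Real.log_div hZ.ne' (Real.exp_pos _).ne', Real.log_exp]
  have hentropy : ∑ a, p a * Real.log (p a)⁻¹ ≤ Real.log (Fintype.card A) := by
    have := strictConcaveOn_log_Ioi.concaveOn.le_map_sum (t := univ) (w := p)
      (p := fun a => (p a)⁻¹) (fun a _ => (hp a).le) (sum_softmaxPol η Ψ x)
      (fun a _ => Set.mem_Ioi.2 (inv_pos.2 (hp a)))
    simpa only [smul_eq_mul, mul_inv_cancel₀ (hp _).ne', sum_const, card_univ, nsmul_eq_mul,
      mul_one] using this
  obtain ⟨a₀, -, ha₀⟩ := exists_mem_eq_sup' (univ_nonempty (α := A)) (Ψ x)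
  have hZ_ge : η * Ψ x a₀ ≤ Real.log Z := by
    rw [Real.le_log_iff_exp_le hZ]
    exact single_le_sum (f := fun a => Real.exp (η * Ψ x a)) (fun a _ => (Real.exp_pos _).le)
      (mem_univ a₀)
  have hsum : ∑ a, p a * Real.log (p a)⁻¹ = Real.log Z - η * polApply (softmaxPol η Ψ) Ψ x := by
    simp only [hlog_inv, mul_sub, sum_sub_distrib, ← sum_mul, polApply, mul_sum]
    rw [show ∑ a, p a = 1 from sum_softmaxPol η Ψ x, one_mul]
    congr 1; exact sum_congr rfl fun a _ => by ring
  rw [ha₀, sub_le_comm, le_div_iff₀ hη]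
  linarith

end softmax

lemma norm_le_of_bellmanOpt_eq_self [Fintype X] [Fintype A] [Nonempty X] [Nonempty A]
    {P : X → A → X → ℝ} (hP0 : ∀ x a x', 0 ≤ P x a x') (hP1 : ∀ x a, ∑ x', P x a x' = 1)
    {r : X → A → ℝ} {Rmax : ℝ} (hr : ∀ x a, |r x a| ≤ Rmax) {γ : ℝ} (hγ0 : 0 ≤ γ) (hγ1 : γ < 1)
    {Q : X → A → ℝ} (hQ : bellmanOpt P r γ Q = Q) : ‖Q‖ ≤ Rmax / (1 - γ) := by
  have hmax : ∀ x', |univ.sup' univ_nonempty (Q x')| ≤ ‖Q‖ := fun x' => by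
    obtain ⟨a, -, ha⟩ := exists_mem_eq_sup' (univ_nonempty (α := A)) (Q x')
    exact ha ▸ abs_apply_le_norm Q x' a
  have hQ_le : ‖Q‖ ≤ Rmax + γ * ‖Q‖ := norm_le_of_forall_abs_le fun x a => by
    rw [← congrFun₂ hQ x a, bellmanOpt]
    calc _ ≤ |r x a| + γ * |∑ x', P x a x' * univ.sup' univ_nonempty (Q x')| := by
          rw [← abs_of_nonneg hγ0, ← abs_mul, abs_of_nonneg hγ0]; exact abs_add_le _ _
      _ ≤ Rmax + γ * ‖Q‖ := by gcongr; exacts [hr x a, abs_sum_mul_le (hP0 x a) (hP1 x a) hmax]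
  rw [le_div_iff₀ (by linarith)]
  linarith

lemma polApply_add_const [Fintype A] {pol : X → A → ℝ} {x : X} (h1 : ∑ a, pol x a = 1)
    (Q : X → A → ℝ) (v : X → ℝ) :
    polApply pol (fun x a => Q x a + v x) x = polApply pol Q x + v x := by
  simp only [polApply, mul_add, sum_add_distrib, ← sum_mul, h1, one_mul]

lemma polApply_mul_add [Fintype A] (pol : X → A → ℝ) (c : ℝ) (Q Q' : X → A → ℝ) (x : X) :
    polApply pol (fun x a => c * Q x a + Q' x a) x =
      c * polApply pol Q x + polApply pol Q' x := by
  simp only [polApply, mul_add, sum_add_distrib, mul_sum, mul_left_comm]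

noncomputable def cumulativeValue [Fintype A] (pol Ψ : ℕ → X → A → ℝ) (k : ℕ) (x : X) : ℝ :=
  ∑ j ∈ range k, polApply (pol j) (Ψ j) x

lemma cumulativeValue_succ [Fintype A] (pol Ψ : ℕ → X → A → ℝ) (k : ℕ) (x : X) :
    cumulativeValue pol Ψ (k + 1) x = cumulativeValue pol Ψ k x + polApply (pol k) (Ψ k) x :=
  sum_range_succ _ _

section dpp

variable [Fintype X] [Fintype A] {P : X → A → X → ℝ} {r : X → A → ℝ} {γ : ℝ}
  {Ψ pol Q : ℕ → X → A → ℝ}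

lemma dpp_iterate_eq
    (hΨ : ∀ k x a, Ψ (k + 1) x a =
      Ψ k x a + bellman P r γ (pol k) (Ψ k) x a - polApply (pol k) (Ψ k) x)
    (k : ℕ) (x : X) (a : A) :
    Ψ k x a = Ψ 0 x a + k * r x a + γ * ∑ x', P x a x' * cumulativeValue pol Ψ k x' -
      cumulativeValue pol Ψ k x := by
  induction k with
  | zero => simp [cumulativeValue]
  | succ k ih =>
    rw [hΨ, ih, bellman_apply]
    simp only [cumulativeValue_succ, mul_add, sum_add_distrib]
    push_cast
    ring

lemma dpp_auxiliary_add_eq_of_mul_eq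
    (hΨ : ∀ k x a, Ψ (k + 1) x a =
      Ψ k x a + bellman P r γ (pol k) (Ψ k) x a - polApply (pol k) (Ψ k) x)
    (hQ0 : Q 0 = Ψ 0) {k : ℕ}
    (hk : ∀ x a, k * Q k x a = k * r x a + γ * ∑ x', P x a x' * cumulativeValue pol Ψ k x')
    (x : X) (a : A) :
    k * Q k x a + Q 0 x a = Ψ k x a + cumulativeValue pol Ψ k x := by
  rw [dpp_iterate_eq hΨ, hk, hQ0]
  ring

lemma dpp_auxiliary_mul_eq (hpol : ∀ k x, ∑ a, pol k x a = 1)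
    (hΨ : ∀ k x a, Ψ (k + 1) x a =
      Ψ k x a + bellman P r γ (pol k) (Ψ k) x a - polApply (pol k) (Ψ k) x)
    (hQ0 : Q 0 = Ψ 0)
    (hQ : ∀ k : ℕ, ∀ x a, Q (k + 1) x a =
      ((k : ℝ) / (k + 1)) * bellman P r γ (pol k) (Q k) x a +
        (1 / ((k : ℝ) + 1)) * bellman P r γ (pol k) (Q 0) x a)
    (k : ℕ) (x : X) (a : A) :
    k * Q k x a = k * r x a + γ * ∑ x', P x a x' * cumulativeValue pol Ψ k x' := by
  induction k generalizing x a with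
  | zero => simp [cumulativeValue]
  | succ k ih =>
    have hpolApply : ∀ x', k * polApply (pol k) (Q k) x' + polApply (pol k) (Q 0) x' =
        cumulativeValue pol Ψ (k + 1) x' := fun x' => by
      rw [← polApply_mul_add, funext₂ (dpp_auxiliary_add_eq_of_mul_eq hΨ hQ0 ih),
        polApply_add_const (hpol k x'), cumulativeValue_succ, add_comm]
    calc ((k + 1 : ℕ) : ℝ) * Q (k + 1) x a =
          k * bellman P r γ (pol k) (Q k) x a + bellman P r γ (pol k) (Q 0) x a := by
          rw [hQ]; push_cast; field_simp
      _ = (k + 1) * r x a + γ * ∑ x', P x a x' *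
          (k * polApply (pol k) (Q k) x' + polApply (pol k) (Q 0) x') := by
          simp only [bellman_apply, mul_add, sum_add_distrib, mul_sum, mul_left_comm]
          ring
      _ = _ := by simp only [hpolApply]; push_cast; ring

end dpp

section dppError

variable [Fintype X] [Fintype A] [Nonempty A] {P : X → A → X → ℝ}
  {r : X → A → ℝ} {γ η : ℝ} {Ψ pol Q : ℕ → X → A → ℝ} {Qstar : X → A → ℝ}

lemma dpp_abs_sup'_sub_cumulativeValue_le (hη : 0 < η)
    (hpol : ∀ k, pol k = softmaxPol η (Ψ k))
    (hΨ : ∀ k x a, Ψ (k + 1) x a =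
      Ψ k x a + bellman P r γ (pol k) (Ψ k) x a - polApply (pol k) (Ψ k) x)
    (hQ0 : Q 0 = Ψ 0)
    (hQ : ∀ k : ℕ, ∀ x a, Q (k + 1) x a =
      ((k : ℝ) / (k + 1)) * bellman P r γ (pol k) (Q k) x a +
        (1 / ((k : ℝ) + 1)) * bellman P r γ (pol k) (Q 0) x a)
    (k : ℕ) (x : X) :
    |(k + 1) * univ.sup' univ_nonempty (Qstar x) - cumulativeValue pol Ψ (k + 1) x| ≤
      ‖((k : ℝ) + 1) • Qstar - ((k : ℝ) • Q k + Q 0)‖ + Real.log (Fintype.card A) / η := by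
  have hpol1 : ∀ k x, ∑ a, pol k x a = 1 := fun k x => hpol k ▸ sum_softmaxPol η (Ψ k) x
  have hsum : univ.sup' univ_nonempty (fun a => k * Q k x a + Q 0 x a) =
      univ.sup' univ_nonempty (Ψ k x) + cumulativeValue pol Ψ k x := by
    simp only [dpp_auxiliary_add_eq_of_mul_eq hΨ hQ0 (dpp_auxiliary_mul_eq hpol1 hΨ hQ0 hQ k),
      sup'_add]
  have hlip : |univ.sup' univ_nonempty (fun a => (k + 1) * Qstar x a) -
      univ.sup' univ_nonempty (fun a => k * Q k x a + Q 0 x a)| ≤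
      ‖((k : ℝ) + 1) • Qstar - ((k : ℝ) • Q k + Q 0)‖ :=
    abs_sup'_sub_sup'_le _ fun a _ =>
      abs_apply_le_norm (((k : ℝ) + 1) • Qstar - ((k : ℝ) • Q k + Q 0)) x a
  have hupper := polApply_le_sup' (fun a => (softmaxPol_pos η (Ψ k) x a).le)
    (sum_softmaxPol η (Ψ k) x) (Ψ k)
  have hlower := sup'_sub_log_card_div_le_polApply_softmaxPol hη (Ψ k) x
  rw [← mul₀_sup' (by positivity), hsum] at hlip
  rw [cumulativeValue_succ, hpol k]
  rw [abs_le] at hlip ⊢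
  constructor <;> linarith [hlip.1, hlip.2]

lemma dpp_error_succ_le [Nonempty X] (hP0 : ∀ x a x', 0 ≤ P x a x')
    (hP1 : ∀ x a, ∑ x', P x a x' = 1) (hγ0 : 0 ≤ γ) (hη : 0 < η) (hpol : ∀ k, pol k = softmaxPol η (Ψ k))
    (hΨ : ∀ k x a, Ψ (k + 1) x a =
      Ψ k x a + bellman P r γ (pol k) (Ψ k) x a - polApply (pol k) (Ψ k) x)
    (hQstar : bellmanOpt P r γ Qstar = Qstar) (hQ0 : Q 0 = Ψ 0)
    (hQ : ∀ k : ℕ, ∀ x a, Q (k + 1) x a =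
      ((k : ℝ) / (k + 1)) * bellman P r γ (pol k) (Q k) x a +
        (1 / ((k : ℝ) + 1)) * bellman P r γ (pol k) (Q 0) x a)
    (k : ℕ) :
    (k + 1) * ‖Qstar - Q (k + 1)‖ ≤
      γ * (k * ‖Qstar - Q k‖ + ‖Qstar - Q 0‖ + Real.log (Fintype.card A) / η) := by
  have hpol1 : ∀ k x, ∑ a, pol k x a = 1 := fun k x => hpol k ▸ sum_softmaxPol η (Ψ k) x
  have hpointwise : ∀ x a, |(((k : ℝ) + 1) • (Qstar - Q (k + 1))) x a| ≤
      γ * (‖((k : ℝ) + 1) • Qstar - ((k : ℝ) • Q k + Q 0)‖ + Real.log (Fintype.card A) / η) := by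
    intro x a
    have hQk := dpp_auxiliary_mul_eq hpol1 hΨ hQ0 hQ (k + 1) x a
    have hfix := congrFun₂ hQstar x a
    simp only [bellmanOpt] at hfix
    push_cast at hQk
    have hdiff : (((k : ℝ) + 1) • (Qstar - Q (k + 1))) x a = γ * ∑ x', P x a x' *
        ((k + 1) * univ.sup' univ_nonempty (Qstar x') - cumulativeValue pol Ψ (k + 1) x') := by
      simp only [Pi.smul_apply, Pi.sub_apply, smul_eq_mul, mul_sub, sum_sub_distrib,
        mul_left_comm _ ((k : ℝ) + 1), ← mul_sum]
      linear_combination -((k : ℝ) + 1) * hfix - hQk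
    rw [hdiff, abs_mul, abs_of_nonneg hγ0]
    exact mul_le_mul_of_nonneg_left (abs_sum_mul_le (hP0 x a) (hP1 x a)
      (dpp_abs_sup'_sub_cumulativeValue_le hη hpol hΨ hQ0 hQ k)) hγ0
  have hsplit : ((k : ℝ) + 1) • Qstar - ((k : ℝ) • Q k + Q 0) =
      (k : ℝ) • (Qstar - Q k) + (Qstar - Q 0) := by
    module
  calc (k + 1) * ‖Qstar - Q (k + 1)‖ = ‖((k : ℝ) + 1) • (Qstar - Q (k + 1))‖ := by
        rw [norm_smul, Real.norm_of_nonneg (by positivity)]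
    _ ≤ γ * (‖((k : ℝ) + 1) • Qstar - ((k : ℝ) • Q k + Q 0)‖ +
        Real.log (Fintype.card A) / η) := norm_le_of_forall_abs_le hpointwise
    _ ≤ γ * (k * ‖Qstar - Q k‖ + ‖Qstar - Q 0‖ + Real.log (Fintype.card A) / η) := by
        rw [hsplit]
        gcongr
        refine (norm_add_le _ _).trans_eq ?_
        rw [norm_smul, Real.norm_natCast]

end dppError

theorem dpp_auxiliary_error_bound_general
    {X A : Type*} [Fintype X] [Fintype A] [Nonempty X] [Nonempty A]
    (P : X → A → X → ℝ) (hP0 : ∀ x a x', 0 ≤ P x a x') (hP1 : ∀ x a, ∑ x', P x a x' = 1)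
    (r : X → A → ℝ) (Rmax : ℝ) (hr : ∀ x a, |r x a| ≤ Rmax)
    (γ : ℝ) (hγ0 : 0 ≤ γ) (hγ1 : γ < 1)
    (Vmax : ℝ) (hV : Vmax = Rmax / (1 - γ))
    (η : ℝ) (hη : 0 < η)
    (Ψ : ℕ → X → A → ℝ) (hΨ0 : supNorm (Ψ 0) ≤ Vmax)
    (pol : ℕ → X → A → ℝ) (hpol : ∀ k, pol k = softmaxPol η (Ψ k))
    (hΨ : ∀ k x a, Ψ (k + 1) x a =
      Ψ k x a + bellman P r γ (pol k) (Ψ k) x a - polApply (pol k) (Ψ k) x)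
    (Qstar : X → A → ℝ) (hQstar : bellmanOpt P r γ Qstar = Qstar)
    (Q : ℕ → X → A → ℝ) (hQ0 : Q 0 = Ψ 0)
    (hQ : ∀ k : ℕ, ∀ x a, Q (k + 1) x a =
      ((k : ℝ) / (k + 1)) * bellman P r γ (pol k) (Q k) x a +
        (1 / ((k : ℝ) + 1)) * bellman P r γ (pol k) (Q 0) x a) :
    ∀ k : ℕ, supNorm (fun x a => Qstar x a - Q (k + 1) x a) ≤
      γ * (4 * Vmax + Real.log (Fintype.card A) / η) /
        ((1 - γ) * ((k : ℝ) + 1)) := by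
  intro k
  set ℓ := Real.log (Fintype.card A) / η
  have hℓ : 0 ≤ ℓ := div_nonneg (Real.log_natCast_nonneg _) hη.le
  rw [supNorm_eq_norm] at hΨ0
  have hQstar_le : ‖Qstar‖ ≤ Vmax := hV ▸ norm_le_of_bellmanOpt_eq_self hP0 hP1 hr hγ0 hγ1 hQstar
  have hinit : ‖Qstar - Q 0‖ ≤ 2 * Vmax := hQ0 ▸ (norm_sub_le _ _).trans (by linarith)
  have hrec : ((k : ℝ) + 1) * ‖Qstar - Q (k + 1)‖ ≤ γ * (‖Qstar - Q 0‖ + ℓ) / (1 - γ) := by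
    exact_mod_cast le_div_one_sub_of_succ_le_mul_add (e := fun k => k * ‖Qstar - Q k‖)
      (c := ‖Qstar - Q 0‖ + ℓ) hγ0 hγ1 (by simp only [CharP.cast_eq_zero, zero_mul]; positivity)
      (fun k => by simpa only [Nat.cast_succ, add_assoc] using
        dpp_error_succ_le hP0 hP1 hγ0 hη hpol hΨ hQstar hQ0 hQ k) (k + 1)
  rw [supNorm_eq_norm, ← div_div, le_div_iff₀ (by positivity), mul_comm]
  refine hrec.trans ?_
  gcongr
  linarith [norm_nonneg (Ψ 0)]

/-- Lemma 2 of the paper: `ℓ∞`-norm bound on `Q* − Q_k` for the exact DPP auxiliary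
action-value functions. -/
theorem dpp_auxiliary_error_bound
    {X A : Type*} [Fintype X] [Fintype A] [Nonempty X] [Nonempty A]
    (P : X → A → X → ℝ) (hP0 : ∀ x a x', 0 ≤ P x a x') (hP1 : ∀ x a, ∑ x', P x a x' = 1)
    (r : X → A → ℝ) (Rmax : ℝ) (hR : 0 < Rmax) (hr : ∀ x a, |r x a| ≤ Rmax)
    (γ : ℝ) (hγ0 : 0 ≤ γ) (hγ1 : γ < 1)
    (Vmax : ℝ) (hV : Vmax = Rmax / (1 - γ))
    (η : ℝ) (hη : 0 < η)
    (Ψ : ℕ → X → A → ℝ) (hΨ0 : supNorm (Ψ 0) ≤ Vmax)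
    (pol : ℕ → X → A → ℝ) (hpol : ∀ k, pol k = softmaxPol η (Ψ k))
    (hΨ : ∀ k x a, Ψ (k + 1) x a =
      Ψ k x a + bellman P r γ (pol k) (Ψ k) x a - polApply (pol k) (Ψ k) x)
    (Qstar : X → A → ℝ) (hQstar : bellmanOpt P r γ Qstar = Qstar)
    (Q : ℕ → X → A → ℝ) (hQ0 : Q 0 = Ψ 0)
    (hQ : ∀ k : ℕ, ∀ x a, Q (k + 1) x a =
      ((k : ℝ) / (k + 1)) * bellman P r γ (pol k) (Q k) x a +
        (1 / ((k : ℝ) + 1)) * bellman P r γ (pol k) (Q 0) x a) :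
    ∀ k : ℕ, supNorm (fun x a => Qstar x a - Q (k + 1) x a) ≤
      γ * (4 * Vmax + Real.log (Fintype.card A) / η) /
        ((1 - γ) * ((k : ℝ) + 1)) :=
  dpp_auxiliary_error_bound_general P hP0 hP1 r Rmax hr γ hγ0 hγ1 Vmax hV η hη Ψ hΨ0 pol hpol hΨ
    Qstar hQstar Q hQ0 hQ
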